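/- Let d be an odd positive integer and let Π_d sign = Σ_{k=0}^{d} ⟨sign, H_k⟩_γ · H_k be the degree-d Hermite truncation of the sign function. Then for every x ≥ 0, Π_d sign(x) = √(2d/π) · H_{d−1}(0) · ∫_0^x H_d(t)/t dt. (For odd d the integrand t ↦ H_d(t)/t extends continuously to t = 0 since H_d(0) = 0.) -/

import Mathlib

open MeasureTheory ProbabilityTheory Real

/-- The `k`-th normalized Hermite polynomial (as a function on `ℝ`): the monic
probabilist's Hermite polynomial divided by `√(k!)`. -/
noncomputable def normHermite (k : ℕ) (x : ℝ) : ℝ :=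
  Polynomial.aeval x (Polynomial.hermite k) / Real.sqrt (Nat.factorial k)

/-- The sign function: `1` if `x ≥ 0`, `-1` otherwise. -/
noncomputable def signFn (x : ℝ) : ℝ := if 0 ≤ x then 1 else -1

/-- The degree-`d` Hermite truncation of a function `f`:
`Π_d f = Σ_{k=0}^{d} ⟨f, H_k⟩_γ H_k`. -/
noncomputable def hermiteProj (d : ℕ) (f : ℝ → ℝ) (x : ℝ) : ℝ :=
  ∑ k ∈ Finset.range (d + 1),
    (∫ y, f y * normHermite k y ∂(gaussianReal 0 1)) * normHermite k x

/-!
Write `φ t = exp (-t²/2)`. The recurrence `t Hₖ = √(k+1) Hₖ₊₁ + √k Hₖ₋₁` and `Hₖ' = √k Hₖ₋₁` give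
`(Hₖ φ)' = -√(k+1) Hₖ₊₁ φ`; since the distributional derivative of `sign` is `2δ₀`, this yields
`⟨sign, Hₖ₊₁⟩_γ = √(2/π) Hₖ(0) / √(k+1)`, while `⟨sign, H₀⟩_γ = 0` by symmetry. As
`Hₖ₊₁' = √(k+1) Hₖ` and `Hₖ(0) Hₖ₊₁(0) = 0` (one of the two indices is odd), the truncation is
`Π_d sign x = √(2/π) ∫₀ˣ K_d(t, 0) dt` for the kernel `K_d(x, y) = Σ_{j<d} H_j(x) H_j(y)`. The
Christoffel–Darboux formula `(x - y) K_d(x, y) = √d (H_d(x) H_{d-1}(y) - H_{d-1}(x) H_d(y))` at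
`y = 0`, where `H_d(0) = 0` for odd `d`, turns the integrand into `√d H_{d-1}(0) H_d(t) / t`.
-/

open Polynomial Filter Set
open scoped Nat

namespace Polynomial

theorem derivative_hermite_succ (n : ℕ) :
    derivative (hermite (n + 1)) = (n + 1 : ℤ[X]) * hermite n := by
  induction n with
  | zero => simp
  | succ n ih =>
    rw [hermite_succ (n + 1), derivative_sub, derivative_mul, ih, hermite_succ n,
      derivative_mul]
    simp only [derivative_X, derivative_add, derivative_natCast, derivative_one]
    push_cast
    ring

theorem X_mul_hermite_succ (n : ℕ) :
    X * hermite (n + 1) = hermite (n + 2) + (n + 1 : ℤ[X]) * hermite n := by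
  rw [hermite_succ (n + 1), derivative_hermite_succ]
  ring

end Polynomial

theorem sqrt_factorial_succ (n : ℕ) :
    √((n + 1)! : ℝ) = √(n + 1 : ℝ) * √(n ! : ℝ) := by
  rw [Nat.factorial_succ, Nat.cast_mul, Real.sqrt_mul (by positivity)]
  push_cast
  ring

theorem normHermite_zero (x : ℝ) : normHermite 0 x = 1 := by
  simp [normHermite]

theorem normHermite_one (x : ℝ) : normHermite 1 x = x := by
  simp [normHermite]

-- At `n = 0` the index `n - 1` truncates to `0`, harmlessly: its coefficient is `√0`.
theorem mul_normHermite (n : ℕ) (x : ℝ) :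
    x * normHermite n x =
      √(n + 1 : ℝ) * normHermite (n + 1) x + √(n : ℝ) * normHermite (n - 1) x := by
  rcases n with _ | n
  · simp [normHermite_zero, normHermite_one]
  have h := congrArg (aeval x) (X_mul_hermite_succ n)
  simp only [map_mul, map_add, aeval_X, map_natCast, map_one] at h
  simp only [normHermite, Nat.add_sub_cancel, sqrt_factorial_succ (n + 1), sqrt_factorial_succ n]
  push_cast
  field_simp
  rw [Real.sq_sqrt (by positivity)]
  linear_combination h

theorem hasDerivAt_normHermite (n : ℕ) (x : ℝ) :
    HasDerivAt (normHermite n) (√(n : ℝ) * normHermite (n - 1) x) x := by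
  rcases n with _ | n
  · simpa [funext normHermite_zero] using hasDerivAt_const x (1 : ℝ)
  have h := ((hermite (n + 1)).hasDerivAt_aeval x).div_const √((n + 1)! : ℝ)
  rw [derivative_hermite_succ] at h
  refine h.congr_deriv ?_
  simp only [normHermite, Nat.add_sub_cancel, sqrt_factorial_succ n, map_mul, map_add,
    map_natCast, map_one]
  push_cast
  field_simp
  rw [Real.sq_sqrt (by positivity)]
  ring

theorem continuous_normHermite (n : ℕ) : Continuous (normHermite n) :=
  (hermite n).continuous_aeval.div_const _

theorem normHermite_zero_eq_zero {n : ℕ} (hn : Odd n) : normHermite n 0 = 0 := by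
  rw [normHermite, ← coeff_zero_eq_aeval_zero', coeff_hermite_of_odd_add (by simpa using hn)]
  simp

theorem normHermite_zero_mul_normHermite_succ_zero (n : ℕ) :
    normHermite n 0 * normHermite (n + 1) 0 = 0 := by
  rcases Nat.even_or_odd n with hn | hn
  · rw [normHermite_zero_eq_zero hn.add_one, mul_zero]
  · rw [normHermite_zero_eq_zero hn, zero_mul]

theorem integrable_aeval_mul_exp_neg_sq_div_two {R : Type*} [CommSemiring R] [Algebra R ℝ]
    (p : R[X]) : Integrable fun t : ℝ => aeval t p * exp (-(t ^ 2 / 2)) := by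
  induction p using Polynomial.induction_on' with
  | add p q hp hq =>
    simp only [map_add, add_mul]
    exact hp.add hq
  | monomial n a =>
    have h := integrable_rpow_mul_exp_neg_mul_sq (b := 1 / 2) (by norm_num) (s := n)
      (by linarith [(n.cast_nonneg : (0 : ℝ) ≤ n)])
    refine (h.const_mul (algebraMap R ℝ a)).congr (Eventually.of_forall fun t => ?_)
    simp only [aeval_monomial, Real.rpow_natCast]
    rw [show -(1 / 2) * t ^ 2 = -(t ^ 2 / 2) by ring, mul_assoc]

theorem integrable_normHermite_mul_exp (n : ℕ) :
    Integrable fun t => normHermite n t * exp (-(t ^ 2 / 2)) := by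
  simpa only [normHermite, div_mul_eq_mul_div] using
    (integrable_aeval_mul_exp_neg_sq_div_two (hermite n)).div_const √(n ! : ℝ)

theorem hasDerivAt_exp_neg_sq_div_two (t : ℝ) :
    HasDerivAt (fun t => exp (-(t ^ 2 / 2))) (-t * exp (-(t ^ 2 / 2))) t := by
  have h : HasDerivAt (fun t : ℝ => -(t ^ 2 / 2)) (-t) t := by
    simpa using ((hasDerivAt_pow 2 t).div_const 2).fun_neg
  simpa [mul_comm] using h.exp

theorem hasDerivAt_normHermite_mul_exp (n : ℕ) (t : ℝ) :
    HasDerivAt (fun t => normHermite n t * exp (-(t ^ 2 / 2)))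
      (-√(n + 1 : ℝ) * (normHermite (n + 1) t * exp (-(t ^ 2 / 2)))) t := by
  refine ((hasDerivAt_normHermite n t).mul (hasDerivAt_exp_neg_sq_div_two t)).congr_deriv ?_
  linear_combination (-exp (-(t ^ 2 / 2))) * mul_normHermite n t

theorem measurable_signFn : Measurable signFn :=
  Measurable.ite measurableSet_Ici measurable_const measurable_const

theorem abs_signFn (x : ℝ) : |signFn x| = 1 := by
  unfold signFn
  split_ifs <;> simp

theorem signFn_neg {x : ℝ} (hx : x ≠ 0) : signFn (-x) = -signFn x := by
  rcases hx.lt_or_gt with h | h <;> simp [signFn, h.le, h.not_ge]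

theorem integral_signFn_mul_eq_zero_of_even {g : ℝ → ℝ} (hg : ∀ x, g (-x) = g x) :
    ∫ x, signFn x * g x = 0 := by
  have h := integral_neg_eq_self (fun x => signFn x * g x) volume
  have hodd : (fun x => signFn (-x) * g (-x)) =ᵐ[volume] fun x => -(signFn x * g x) := by
    filter_upwards [Measure.ae_ne volume 0] with x hx
    rw [signFn_neg hx, hg, neg_mul]
  rw [integral_congr_ae hodd, integral_neg] at h
  linarith

theorem integral_signFn_mul_of_hasDerivAt {f f' : ℝ → ℝ} (hf : ∀ x, HasDerivAt f (f' x) x)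
    (hfi : Integrable f) (hf'i : Integrable f') : ∫ x, signFn x * f' x = -2 * f 0 := by
  have hIoi := integral_Ioi_of_hasDerivAt_of_tendsto' (a := 0) (fun x _ => hf x)
    hf'i.integrableOn
    (tendsto_zero_of_hasDerivAt_of_integrableOn_Ioi (a := 0) (fun x _ => hf x)
      hf'i.integrableOn hfi.integrableOn)
  have hIic := integral_Iic_of_hasDerivAt_of_tendsto' (a := 0) (fun x _ => hf x)
    hf'i.integrableOn
    (tendsto_zero_of_hasDerivAt_of_integrableOn_Iic (a := 0) (fun x _ => hf x)
      hf'i.integrableOn hfi.integrableOn)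
  have hint : Integrable fun x => signFn x * f' x :=
    hf'i.bdd_mul measurable_signFn.aestronglyMeasurable
      (Eventually.of_forall fun x => (abs_signFn x).le)
  have hIci : ∫ x in Ici 0, signFn x * f' x = ∫ x in Ici 0, f' x :=
    setIntegral_congr_fun measurableSet_Ici fun x hx => by simp [signFn, show 0 ≤ x from hx]
  have hIio : ∫ x in Iio 0, signFn x * f' x = ∫ x in Iio 0, -f' x :=
    setIntegral_congr_fun measurableSet_Iio fun x hx => by
      simp [signFn, (show x < 0 from hx).not_ge]
  rw [← integral_add_compl measurableSet_Ici hint, compl_Ici, hIci, hIio, integral_neg,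
    integral_Ici_eq_integral_Ioi, ← integral_Iic_eq_integral_Iio, hIoi, hIic]
  ring

theorem integral_gaussianReal_zero_one (f : ℝ → ℝ) :
    ∫ y, f y ∂gaussianReal 0 1 = (√(2 * π))⁻¹ * ∫ y, f y * exp (-(y ^ 2 / 2)) := by
  rw [integral_gaussianReal_eq_integral_smul one_ne_zero, ← integral_const_mul]
  congr 1 with y
  simp only [gaussianPDFReal_def, NNReal.coe_one, mul_one, sub_zero, neg_div, smul_eq_mul]
  ring

theorem sqrt_two_div_pi : √(2 / π) = 2 / √(2 * π) := by
  rw [show (2 : ℝ) / π = 2 ^ 2 / (2 * π) by field_simp, Real.sqrt_div' _ (by positivity),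
    Real.sqrt_sq zero_le_two]

theorem integral_signFn_mul_normHermite_zero :
    ∫ y, signFn y * normHermite 0 y ∂gaussianReal 0 1 = 0 := by
  simp only [normHermite_zero, mul_one]
  rw [integral_gaussianReal_zero_one, integral_signFn_mul_eq_zero_of_even (by simp), mul_zero]

theorem integral_signFn_mul_normHermite_succ (k : ℕ) :
    ∫ y, signFn y * normHermite (k + 1) y ∂gaussianReal 0 1
      = √(2 / π) * normHermite k 0 / √(k + 1 : ℝ) := by
  have hparts := integral_signFn_mul_of_hasDerivAt (hasDerivAt_normHermite_mul_exp k)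
    (integrable_normHermite_mul_exp k) ((integrable_normHermite_mul_exp (k + 1)).const_mul _)
  have hmul (x : ℝ) :
      signFn x * (-√(k + 1 : ℝ) * (normHermite (k + 1) x * exp (-(x ^ 2 / 2))))
        = -√(k + 1 : ℝ) * (signFn x * normHermite (k + 1) x * exp (-(x ^ 2 / 2))) := by ring
  simp only [hmul, integral_const_mul, zero_pow two_ne_zero, zero_div, neg_zero, exp_zero,
    mul_one] at hparts
  have hI : ∫ y, signFn y * normHermite (k + 1) y * exp (-(y ^ 2 / 2))
      = 2 * normHermite k 0 / √(k + 1 : ℝ) := by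
    rw [eq_div_iff (by positivity)]
    linarith
  rw [integral_gaussianReal_zero_one, hI, sqrt_two_div_pi]
  ring

noncomputable def hermiteKernel (n : ℕ) (x y : ℝ) : ℝ :=
  ∑ j ∈ Finset.range n, normHermite j x * normHermite j y

theorem sub_mul_hermiteKernel_succ (n : ℕ) (x y : ℝ) :
    (x - y) * hermiteKernel (n + 1) x y = √(n + 1 : ℝ) *
      (normHermite (n + 1) x * normHermite n y - normHermite n x * normHermite (n + 1) y) := by
  induction n with
  | zero => simp [hermiteKernel, normHermite_zero, normHermite_one]
  | succ n ih =>
    rw [hermiteKernel, Finset.sum_range_succ, ← hermiteKernel, mul_add, ih]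
    have hx := mul_normHermite (n + 1) x
    have hy := mul_normHermite (n + 1) y
    simp only [Nat.add_sub_cancel] at hx hy
    push_cast at hx hy ⊢
    linear_combination normHermite (n + 1) y * hx - normHermite (n + 1) x * hy

theorem integral_normHermite_mul_normHermite_zero (j : ℕ) (x : ℝ) :
    ∫ t in (0 : ℝ)..x, normHermite j t * normHermite j 0
      = normHermite j 0 / √(j + 1 : ℝ) * normHermite (j + 1) x := by
  have hderiv (t : ℝ) :
      HasDerivAt (fun t => normHermite j 0 / √(j + 1 : ℝ) * normHermite (j + 1) t)
        (normHermite j t * normHermite j 0) t := by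
    refine ((hasDerivAt_normHermite (j + 1) t).const_mul _).congr_deriv ?_
    push_cast
    field_simp
  have hzero : normHermite j 0 / √(j + 1 : ℝ) * normHermite (j + 1) 0 = 0 := by
    rw [div_mul_eq_mul_div, normHermite_zero_mul_normHermite_succ_zero, zero_div]
  rw [intervalIntegral.integral_eq_sub_of_hasDerivAt (fun t _ => hderiv t)
    (((continuous_normHermite j).mul continuous_const).intervalIntegrable _ _), hzero, sub_zero]

theorem hermiteProj_signFn (d : ℕ) (x : ℝ) :
    hermiteProj d signFn x = √(2 / π) * ∫ t in (0 : ℝ)..x, hermiteKernel d t 0 := by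
  unfold hermiteKernel
  rw [hermiteProj, Finset.sum_range_succ', integral_signFn_mul_normHermite_zero, zero_mul,
    add_zero, intervalIntegral.integral_finsetSum, Finset.mul_sum]
  · refine Finset.sum_congr rfl fun j _ => ?_
    rw [integral_signFn_mul_normHermite_succ, integral_normHermite_mul_normHermite_zero]
    ring
  · exact fun j _ => ((continuous_normHermite j).mul continuous_const).intervalIntegrable _ _

theorem stmt_8_general (d : ℕ) (hd : Odd d) (x : ℝ) :
    hermiteProj d signFn x
      = Real.sqrt (2 * d / π) * normHermite (d - 1) 0
          * ∫ t in (0 : ℝ)..x, normHermite d t / t := by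
  obtain ⟨n, rfl⟩ : ∃ n, d = n + 1 := ⟨d - 1, (Nat.succ_pred_eq_of_pos hd.pos).symm⟩
  have hkernel : ∀ᵐ t, t ∈ uIoc (0 : ℝ) x → hermiteKernel (n + 1) t 0
      = √(n + 1 : ℝ) * normHermite n 0 * (normHermite (n + 1) t / t) := by
    filter_upwards [Measure.ae_ne volume 0] with t ht _
    have h := sub_mul_hermiteKernel_succ n t 0
    rw [normHermite_zero_eq_zero hd, sub_zero, mul_zero, sub_zero] at h
    field_simp
    linear_combination h
  rw [hermiteProj_signFn, intervalIntegral.integral_congr_ae hkernel,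
    intervalIntegral.integral_const_mul, Nat.add_sub_cancel, ← mul_assoc, ← mul_assoc,
    ← Real.sqrt_mul (by positivity)]
  congr 3
  push_cast
  ring

theorem stmt_8 (d : ℕ) (hd : Odd d) (x : ℝ) (hx : 0 ≤ x) :
    hermiteProj d signFn x
      = Real.sqrt (2 * d / π) * normHermite (d - 1) 0
          * ∫ t in (0 : ℝ)..x, normHermite d t / t :=
  stmt_8_general d hd x
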